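/- (Transfer of Poincaré inequality, Proposition A.2.) Assume: (i) there exists a constant C_P ≥ 0 such that for every x ∈ X0 there exists z ∈ X0 with d(E0(R̂0 x) − x) = d z and ‖z‖ ≤ C_P ‖d z‖ (Poincaré inequality on the image of E0 ∘ R̂0 − Id); (ii) there exists a constant Ĉ_P ≥ 0 such that ‖x̂‖ ≤ Ĉ_P ‖d̂ x̂‖ for every x̂ ∈ (Ker d̂)⊥ (Poincaré inequality for the bottom sequence). Then the top sequence satisfies the Poincaré inequality ‖x‖ ≤ (Ĉ_P ‖E0‖ ‖R̂1‖ + C_P (‖E1‖ ‖R̂1‖ + 1)) ‖d x‖ for every x ∈ (Ker d)⊥. -/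

import Mathlib

/-- Transfer of Poincaré inequality between two-term complexes connected by cochain maps
(Proposition A.2): if the image of `E0 ∘ R̂0 − Id` satisfies a Poincaré inequality with
constant `CP` and the bottom sequence satisfies a Poincaré inequality with constant `ĈP`
on the orthogonal complement of `Ker d̂`, then the top sequence satisfies a Poincaré
inequality on the orthogonal complement of `Ker d` with constant
`ĈP ‖E0‖ ‖R̂1‖ + CP (‖E1‖ ‖R̂1‖ + 1)`. -/
theorem transfer_of_poincare_inequality
    {X0 X1 Xh0 Xh1 : Type*}
    [NormedAddCommGroup X0] [InnerProductSpace ℝ X0] [CompleteSpace X0]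
    [NormedAddCommGroup X1] [InnerProductSpace ℝ X1] [CompleteSpace X1]
    [NormedAddCommGroup Xh0] [InnerProductSpace ℝ Xh0] [CompleteSpace Xh0]
    [NormedAddCommGroup Xh1] [InnerProductSpace ℝ Xh1] [CompleteSpace Xh1]
    (d : X0 →L[ℝ] X1) (dh : Xh0 →L[ℝ] Xh1)
    (R0 : X0 →L[ℝ] Xh0) (R1 : X1 →L[ℝ] Xh1)
    (E0 : Xh0 →L[ℝ] X0) (E1 : Xh1 →L[ℝ] X1)
    (hcochainR : ∀ x : X0, dh (R0 x) = R1 (d x))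
    (hcochainE : ∀ xh : Xh0, d (E0 xh) = E1 (dh xh))
    (CP : ℝ) (hCP : 0 ≤ CP)
    (hPtop : ∀ x : X0, ∃ z : X0, d (E0 (R0 x) - x) = d z ∧ ‖z‖ ≤ CP * ‖d z‖)
    (CPh : ℝ) (hCPh : 0 ≤ CPh)
    (hPbot : ∀ xh ∈ (LinearMap.ker (dh : Xh0 →ₗ[ℝ] Xh1))ᗮ, ‖xh‖ ≤ CPh * ‖dh xh‖) :
    ∀ x ∈ (LinearMap.ker (d : X0 →ₗ[ℝ] X1))ᗮ,
      ‖x‖ ≤ (CPh * ‖E0‖ * ‖R1‖ + CP * (‖E1‖ * ‖R1‖ + 1)) * ‖d x‖ := by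
  intro x hx
  set K : Submodule ℝ Xh0 := LinearMap.ker (dh : Xh0 →ₗ[ℝ] Xh1) with hK
  have hKclosed : IsClosed (K : Set Xh0) := ContinuousLinearMap.isClosed_ker dh
  haveI : CompleteSpace K := hKclosed.completeSpace_coe
  obtain ⟨y, hy, z, hz, hxyz⟩ := K.exists_add_mem_mem_orthogonal (R0 x)
  -- bounds on z
  have hdhz : dh z = R1 (d x) := by
    have hy0 : dh y = 0 := hy
    have h1 : dh (R0 x) = dh z := by rw [hxyz, map_add, hy0, zero_add]
    rw [← h1, hcochainR]
  have hznorm : ‖z‖ ≤ CPh * (‖R1‖ * ‖d x‖) := by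
    calc ‖z‖ ≤ CPh * ‖dh z‖ := hPbot z hz
    _ ≤ CPh * (‖R1‖ * ‖d x‖) := by
        rw [hdhz]
        exact mul_le_mul_of_nonneg_left (R1.le_opNorm (d x)) hCPh
  obtain ⟨w, hw1, hw2⟩ := hPtop x
  have hdw : d w = E1 (R1 (d x)) - d x := by
    rw [← hw1]
    have : d (E0 (R0 x) - x) = d (E0 (R0 x)) - d x := d.map_sub _ _
    rw [this, hcochainE, hcochainR]
  have hwnorm : ‖w‖ ≤ CP * ((‖E1‖ * ‖R1‖ + 1) * ‖d x‖) := by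
    refine hw2.trans (mul_le_mul_of_nonneg_left ?_ hCP)
    rw [hdw]
    calc ‖E1 (R1 (d x)) - d x‖ ≤ ‖E1 (R1 (d x))‖ + ‖d x‖ := norm_sub_le _ _
    _ ≤ ‖E1‖ * (‖R1‖ * ‖d x‖) + ‖d x‖ := by
        have := E1.le_opNorm (R1 (d x))
        have := R1.le_opNorm (d x)
        nlinarith [norm_nonneg (E1 (R1 (d x))), norm_nonneg E1]
    _ = (‖E1‖ * ‖R1‖ + 1) * ‖d x‖ := by ring
  -- kernel element
  have hu : E0 (R0 x) - x - w ∈ LinearMap.ker (d : X0 →ₗ[ℝ] X1) := by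
    simp only [LinearMap.mem_ker, ContinuousLinearMap.coe_coe]
    have : d (E0 (R0 x) - x - w) = d (E0 (R0 x) - x) - d w := by
      rw [d.map_sub]
    rw [this, hw1, sub_self]
  have hEy : E0 y ∈ LinearMap.ker (d : X0 →ₗ[ℝ] X1) := by
    simp only [LinearMap.mem_ker, ContinuousLinearMap.coe_coe]
    rw [hcochainE]
    have hy0 : dh y = 0 := hy
    rw [hy0, map_zero]
  set k : X0 := E0 y - (E0 (R0 x) - x - w) with hkdef
  have hk : k ∈ LinearMap.ker (d : X0 →ₗ[ℝ] X1) := Submodule.sub_mem _ hEy hu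
  have hxk : x - k = E0 z - w := by
    have : E0 (R0 x) = E0 y + E0 z := by rw [hxyz, E0.map_add]
    rw [hkdef, this]; abel
  have hinner : (inner ℝ x k : ℝ) = 0 := by
    have := hx k hk
    rwa [real_inner_comm] at this
  have hpyth : ‖x‖ ≤ ‖x - k‖ := by
    have h2 : ‖x‖ ^ 2 ≤ ‖x - k‖ ^ 2 := by
      rw [norm_sub_sq_real, hinner]
      nlinarith [sq_nonneg ‖k‖]
    exact le_of_pow_le_pow_left₀ two_ne_zero (norm_nonneg _) h2
  calc ‖x‖ ≤ ‖x - k‖ := hpyth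
  _ = ‖E0 z - w‖ := by rw [hxk]
  _ ≤ ‖E0 z‖ + ‖w‖ := norm_sub_le _ _
  _ ≤ ‖E0‖ * ‖z‖ + ‖w‖ := by linarith [E0.le_opNorm z]
  _ ≤ ‖E0‖ * (CPh * (‖R1‖ * ‖d x‖)) + CP * ((‖E1‖ * ‖R1‖ + 1) * ‖d x‖) := by
      have := mul_le_mul_of_nonneg_left hznorm (norm_nonneg E0)
      linarith
  _ = (CPh * ‖E0‖ * ‖R1‖ + CP * (‖E1‖ * ‖R1‖ + 1)) * ‖d x‖ := by ring
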